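/- Let T' be a tree with diameter at least 3 satisfying γ_{t,coi}(T') = |V(T')| - β(T'), and let v be a vertex of T' belonging to some minimum total co-independent dominating set of T'. Let T be obtained from T' by adding a path h₁u₁u₂h₂ on four new vertices and the edge vh₁. Then γ_{t,coi}(T) = |V(T)| - β(T). -/

import Mathlib

open scoped Classical

/-- A set `D` is a total co-independent dominating set of `G`:
it is a total dominating set and its complement is a nonempty independent set. -/
def TotalCoIndep {V : Type*} [Fintype V] (G : SimpleGraph V) (D : Finset V) : Prop :=
  (∀ v : V, ∃ u ∈ D, G.Adj v u) ∧
  (Dᶜ : Finset V).Nonempty ∧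
  ∀ u ∈ (Dᶜ : Finset V), ∀ w ∈ (Dᶜ : Finset V), ¬ G.Adj u w

/-- The total co-independent domination number. -/
noncomputable def gammaTcoi {V : Type*} [Fintype V] (G : SimpleGraph V) : ℕ :=
  sInf {k | ∃ D : Finset V, TotalCoIndep G D ∧ D.card = k}

/-- A finite set of vertices is independent. -/
def IsIndepF {V : Type*} (G : SimpleGraph V) (B : Finset V) : Prop :=
  ∀ u ∈ B, ∀ w ∈ B, ¬ G.Adj u w

/-- The independence number. -/
noncomputable def indepNum {V : Type*} [Fintype V] (G : SimpleGraph V) : ℕ :=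
  sSup {k | ∃ B : Finset V, IsIndepF G B ∧ B.card = k}

/-- A leaf: a vertex with exactly one neighbor (degree one). -/
def IsLeaf {V : Type*} (G : SimpleGraph V) (v : V) : Prop :=
  ∃! u, G.Adj v u

/-- The set of leaves. -/
noncomputable def leaves {V : Type*} [Fintype V] (G : SimpleGraph V) : Finset V :=
  Finset.univ.filter (fun v => IsLeaf G v)

/-- A support vertex: a non-leaf adjacent to a leaf. -/
def IsSupport {V : Type*} (G : SimpleGraph V) (v : V) : Prop :=
  ¬ IsLeaf G v ∧ ∃ u, G.Adj v u ∧ IsLeaf G u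

/-- A semi-support vertex: a non-leaf, non-support vertex adjacent to a support vertex. -/
def IsSemiSupport {V : Type*} (G : SimpleGraph V) (v : V) : Prop :=
  ¬ IsLeaf G v ∧ ¬ IsSupport G v ∧ ∃ u, G.Adj v u ∧ IsSupport G u

/-- An isolated support vertex: a support vertex with no support vertex as neighbor. -/
def IsIsolatedSupport {V : Type*} (G : SimpleGraph V) (v : V) : Prop :=
  IsSupport G v ∧ ∀ u, G.Adj v u → ¬ IsSupport G u

/-!
The complement of a total co-independent dominating set is independent, so
`γ_{t,coi}(G) ≥ |V(G)| - β(G)` for every graph. Conversely, a minimum set `D'` of `T'` containing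
`v` extended by the centre `u₁, u₂` of the new path is total co-independent in `T` (the only edge
leaving `T'` is `v h₁` and `v ∈ D'`), so `γ_{t,coi}(T) ≤ γ_{t,coi}(T') + 2 = |V(T')| - β(T') + 2`.
Since `β(T) ≤ β(T') + β(P₄) = β(T') + 2`, this is at most `|V(T)| - β(T)`.
-/

open Finset

section Bounds

variable {V : Type*} [Fintype V] (G : SimpleGraph V)

lemma card_le_indepNum {B : Finset V} (hB : IsIndepF G B) : #B ≤ indepNum G :=
  le_csSup ⟨Fintype.card V, by rintro k ⟨B, -, rfl⟩; exact B.card_le_univ⟩ ⟨B, hB, rfl⟩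

lemma indepNum_le {m : ℕ} (h : ∀ B : Finset V, IsIndepF G B → #B ≤ m) : indepNum G ≤ m :=
  csSup_le ⟨0, ∅, by simp [IsIndepF], rfl⟩ (by rintro k ⟨B, hB, rfl⟩; exact h B hB)

lemma indepNum_le_card : indepNum G ≤ Fintype.card V :=
  indepNum_le G fun B _ ↦ B.card_le_univ

lemma gammaTcoi_le_card {D : Finset V} (hD : TotalCoIndep G D) : gammaTcoi G ≤ #D :=
  Nat.sInf_le ⟨D, hD, rfl⟩

lemma TotalCoIndep.card_sub_indepNum_le {D : Finset V} (hD : TotalCoIndep G D) :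
    Fintype.card V - indepNum G ≤ #D := by
  have := card_le_indepNum G hD.2.2
  rw [card_compl] at this
  omega

lemma card_sub_indepNum_le_gammaTcoi {D : Finset V} (hD : TotalCoIndep G D) :
    Fintype.card V - indepNum G ≤ gammaTcoi G := by
  obtain ⟨D₀, hD₀, hcard⟩ := Nat.sInf_mem (⟨#D, D, hD, rfl⟩ :
    {k | ∃ D : Finset V, TotalCoIndep G D ∧ #D = k}.Nonempty)
  rw [gammaTcoi, ← hcard]
  exact hD₀.card_sub_indepNum_le G

end Bounds

section Sum

variable {α β : Type*} [Fintype α] [Fintype β] {G : SimpleGraph (α ⊕ β)}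

lemma indepNum_le_comap_inl_add_comap_inr :
    indepNum G ≤ indepNum (G.comap Sum.inl) + indepNum (G.comap Sum.inr) :=
  indepNum_le G fun B hB ↦ by
    rw [← card_toLeft_add_card_toRight]
    gcongr
    · exact card_le_indepNum _ fun a ha a' ha' ↦ hB _ (mem_toLeft.1 ha) _ (mem_toLeft.1 ha')
    · exact card_le_indepNum _ fun b hb b' hb' ↦ hB _ (mem_toRight.1 hb) _ (mem_toRight.1 hb')

lemma TotalCoIndep.disjSum {A : Finset α} {B : Finset β}
    (hA : TotalCoIndep (G.comap Sum.inl) A) (hB : TotalCoIndep (G.comap Sum.inr) B)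
    (hcross : ∀ a b, G.Adj (.inl a) (.inr b) → a ∈ A ∨ b ∈ B) :
    TotalCoIndep G (A.disjSum B) := by
  refine ⟨?_, ?_, ?_⟩
  · rintro (a | b)
    · obtain ⟨u, hu, hau⟩ := hA.1 a
      exact ⟨.inl u, inl_mem_disjSum.2 hu, hau⟩
    · obtain ⟨u, hu, hbu⟩ := hB.1 b
      exact ⟨.inr u, inr_mem_disjSum.2 hu, hbu⟩
  · obtain ⟨a, ha⟩ := hA.2.1
    exact ⟨.inl a, by simpa using ha⟩
  · rintro (a | b) hx (a' | b') hy hadj <;> simp only [mem_compl, inl_mem_disjSum,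
      inr_mem_disjSum] at hx hy
    · exact hA.2.2 a (mem_compl.2 hx) a' (mem_compl.2 hy) hadj
    · exact (hcross a b' hadj).elim hx hy
    · exact (hcross a' b hadj.symm).elim hy hx
    · exact hB.2.2 b (mem_compl.2 hx) b' (mem_compl.2 hy) hadj

end Sum

lemma indepNum_pathGraph_four_le : indepNum (SimpleGraph.pathGraph 4) ≤ 2 :=
  indepNum_le _ fun B hB ↦ by
    simp only [IsIndepF, SimpleGraph.pathGraph_adj] at hB
    revert B
    decide

lemma totalCoIndep_pathGraph_four : TotalCoIndep (SimpleGraph.pathGraph 4) {1, 2} := by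
  refine ⟨?_, ⟨0, by simp⟩, ?_⟩ <;>
    simp only [SimpleGraph.pathGraph_adj, mem_compl, mem_insert, mem_singleton] <;> decide

/-- The new path `h₁u₁u₂h₂` is `Sum.inr 0, 1, 2, 3`. -/
theorem stmt10_general {V' : Type*} [Fintype V'] (T' : SimpleGraph V')
    (hval : gammaTcoi T' = Fintype.card V' - indepNum T')
    (v : V') (hv : ∃ D : Finset V', TotalCoIndep T' D ∧ D.card = gammaTcoi T' ∧ v ∈ D)
    (T : SimpleGraph (V' ⊕ Fin 4))
    (hT : ∀ x y : V' ⊕ Fin 4, T.Adj x y ↔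
      (∃ a b : V', x = Sum.inl a ∧ y = Sum.inl b ∧ T'.Adj a b) ∨
      (x = Sum.inl v ∧ y = Sum.inr 0) ∨ (x = Sum.inr 0 ∧ y = Sum.inl v) ∨
      (x = Sum.inr 0 ∧ y = Sum.inr 1) ∨ (x = Sum.inr 1 ∧ y = Sum.inr 0) ∨
      (x = Sum.inr 1 ∧ y = Sum.inr 2) ∨ (x = Sum.inr 2 ∧ y = Sum.inr 1) ∨
      (x = Sum.inr 2 ∧ y = Sum.inr 3) ∨ (x = Sum.inr 3 ∧ y = Sum.inr 2)) :
    gammaTcoi T = Fintype.card (V' ⊕ Fin 4) - indepNum T := by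
  obtain ⟨D', hD', hcard, hvD'⟩ := hv
  have hleft : T.comap Sum.inl = T' := by ext; simp [hT]
  have hright : T.comap Sum.inr = SimpleGraph.pathGraph 4 := by
    ext i j
    simp only [SimpleGraph.comap_adj, hT, SimpleGraph.pathGraph_adj]
    fin_cases i <;> fin_cases j <;> simp
  have hD : TotalCoIndep T (D'.disjSum {1, 2}) :=
    (hleft ▸ hD').disjSum (hright ▸ totalCoIndep_pathGraph_four) fun a b hab ↦ by
      obtain ⟨rfl, -⟩ : a = v ∧ b = 0 := by simpa [hT] using hab
      exact .inl hvD'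
  have hβ : indepNum T ≤ indepNum T' + 2 := by
    have := indepNum_le_comap_inl_add_comap_inr (G := T)
    rw [hleft, hright] at this
    linarith [indepNum_pathGraph_four_le]
  have hup : gammaTcoi T ≤ Fintype.card V' - indepNum T' + 2 := by
    simpa [card_disjSum, hcard, hval] using gammaTcoi_le_card T hD
  have hlow := card_sub_indepNum_le_gammaTcoi T hD
  have hβ' := indepNum_le_card T'
  rw [Fintype.card_sum, Fintype.card_fin] at hlow ⊢
  omega

/-- Operation O₃: attaching a path `h₁u₁u₂h₂` by joining a vertex `v` of some minimum total
co-independent dominating set to the leaf `h₁` preserves `γ_{t,coi} = n - β`.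
Here `h₁,u₁,u₂,h₂` are `Sum.inr 0, 1, 2, 3`. -/
theorem stmt10 {V' : Type*} [Fintype V'] (T' : SimpleGraph V') (hT' : T'.IsTree)
    (hdiam : ∃ x y : V', 3 ≤ T'.dist x y)
    (hval : gammaTcoi T' = Fintype.card V' - indepNum T')
    (v : V') (hv : ∃ D : Finset V', TotalCoIndep T' D ∧ D.card = gammaTcoi T' ∧ v ∈ D)
    (T : SimpleGraph (V' ⊕ Fin 4))
    (hT : ∀ x y : V' ⊕ Fin 4, T.Adj x y ↔
      (∃ a b : V', x = Sum.inl a ∧ y = Sum.inl b ∧ T'.Adj a b) ∨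
      (x = Sum.inl v ∧ y = Sum.inr 0) ∨ (x = Sum.inr 0 ∧ y = Sum.inl v) ∨
      (x = Sum.inr 0 ∧ y = Sum.inr 1) ∨ (x = Sum.inr 1 ∧ y = Sum.inr 0) ∨
      (x = Sum.inr 1 ∧ y = Sum.inr 2) ∨ (x = Sum.inr 2 ∧ y = Sum.inr 1) ∨
      (x = Sum.inr 2 ∧ y = Sum.inr 3) ∨ (x = Sum.inr 3 ∧ y = Sum.inr 2)) :
    gammaTcoi T = Fintype.card (V' ⊕ Fin 4) - indepNum T :=
  stmt10_general T' hval v hv T hT
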